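/- arXiv:1812.00282 — 3 statements merged into one kernel-verified Lean document; each statement's English description precedes it below -/
import Mathlib

section
/- CheckAT correctness under bounded distance: suppose a counter was last set at slice t' with t - t' < 2k, and it stores v = ACT_{t'}. Then for any k' with 1 ≤ k' ≤ k, the condition (ACT_t + 2k - v) mod (2k) ≤ k' - 1 holds if and only if t' lies in the window W(t - k' + 1, k'), i.e., t - t' ≤ k' - 1. -/
theorem checkAT_correct (k : ℕ) (hk : 1 ≤ k) (ACT : ℕ → ℕ)
    (h0 : ACT 0 < 2 * k)
    (hrec : ∀ t, ACT (t + 1) = (ACT t + 1) % (2 * k))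
    (t' t k' : ℕ) (hle : t' ≤ t) (hd : t - t' < 2 * k)
    (hk1 : 1 ≤ k') (hk2 : k' ≤ k) :
    (ACT t + 2 * k - ACT t') % (2 * k) ≤ k' - 1 ↔ t - t' ≤ k' - 1 := by
  have hn : 0 < 2 * k := by omega
  have hlt : ∀ n, ACT n < 2 * k := by
    intro n
    induction n with
    | zero => exact h0
    | succ m ih => rw [hrec]; exact Nat.mod_lt _ hn
  have key : ∀ d, ACT (t' + d) = (ACT t' + d) % (2 * k) := by
    intro d
    induction d with
    | zero => simp [Nat.mod_eq_of_lt (hlt t')]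
    | succ m ih =>
      rw [← Nat.add_assoc, hrec, ih, Nat.mod_add_mod, Nat.add_assoc]
  set d := t - t' with hdd
  have ht : t = t' + d := by omega
  have hACT : ACT t = (ACT t' + d) % (2 * k) := by rw [ht]; exact key d
  set a := ACT t' with ha
  have ha2 : a < 2 * k := hlt t'
  have hq : (a + d) % (2 * k) = a + d ∨ (a + d) % (2 * k) + 2 * k = a + d := by
    rcases Nat.lt_or_ge (a + d) (2 * k) with h | h
    · left; exact Nat.mod_eq_of_lt h
    · right
      have : a + d - 2 * k < 2 * k := by omega
      have h2 : (a + d) % (2 * k) = (a + d - 2 * k) % (2 * k) := by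
        conv_lhs => rw [show a + d = (a + d - 2 * k) + 2 * k by omega]
        simp [Nat.add_mod_right]
      rw [h2, Nat.mod_eq_of_lt this]; omega
  have hmain : (ACT t + 2 * k - a) % (2 * k) = d := by
    rw [hACT]
    rcases hq with h | h
    · rw [h, show a + d + 2 * k - a = d + 2 * k by omega, Nat.add_mod_right,
        Nat.mod_eq_of_lt hd]
    · rw [show (a + d) % (2 * k) + 2 * k - a = d by omega, Nat.mod_eq_of_lt hd]
  rw [hmain]
end

section
/- PreserveAT invariant: if at the beginning of slice t' the counter's true distance d₀ satisfies d₀ < k (so PreserveAT leaves its value unchanged), and the counter is not set during slices t' through t'' where t' ≤ t'' ≤ t' + k - 1, then at the end of slice t'' the counter's true distance d₀ + (t'' - t') is strictly less than 2k, so the computed distance formula (ACT mod 2k arithmetic) returns the true distance. -/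
lemma act_closed (k : ℕ) (hk : 1 ≤ k) (ACT : ℕ → ℕ) (h0 : ACT 0 < 2 * k)
    (hrec : ∀ t, ACT (t + 1) = (ACT t + 1) % (2 * k)) :
    ∀ t, ACT t = (ACT 0 + t) % (2 * k) := by
  intro t
  induction t with
  | zero => simp [Nat.mod_eq_of_lt h0]
  | succ n ih =>
    rw [hrec, ih, Nat.mod_add_mod, ← Nat.add_assoc]

lemma key_mod (m r diff : ℕ) (hm : 0 < m) (hr : r < m) (hd : diff < m) :
    ((r + diff) % m + m - r) % m = diff := by
  rcases lt_or_ge (r + diff) m with h | h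
  · rw [Nat.mod_eq_of_lt h]
    have : r + diff + m - r = diff + m := by omega
    rw [this, Nat.add_mod_right, Nat.mod_eq_of_lt hd]
  · have h2 : r + diff - m < m := by omega
    rw [Nat.mod_eq_sub_mod h, Nat.mod_eq_of_lt h2]
    have : r + diff - m + m - r = diff := by omega
    rw [this, Nat.mod_eq_of_lt hd]

theorem preserveAT_invariant (k : ℕ) (hk : 1 ≤ k) (ACT : ℕ → ℕ)
    (h0 : ACT 0 < 2 * k)
    (hrec : ∀ t, ACT (t + 1) = (ACT t + 1) % (2 * k))
    (t' t'' d₀ : ℕ) (hd0 : d₀ ≤ t') (hdk : d₀ < k)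
    (h1 : t' ≤ t'') (h2 : t'' ≤ t' + k - 1) :
    d₀ + (t'' - t') < 2 * k ∧
    (ACT t'' + 2 * k - ACT (t' - d₀)) % (2 * k) = d₀ + (t'' - t') := by
  have hm : 0 < 2 * k := by omega
  have hlt : d₀ + (t'' - t') < 2 * k := by omega
  refine ⟨hlt, ?_⟩
  have hclosed := act_closed k hk ACT h0 hrec
  rw [hclosed t'', hclosed (t' - d₀)]
  set r := (ACT 0 + (t' - d₀)) % (2 * k) with hrdef
  have hr : r < 2 * k := Nat.mod_lt _ hm
  have heq : ACT 0 + t'' = (ACT 0 + (t' - d₀)) + (d₀ + (t'' - t')) := by omega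
  rw [heq, Nat.add_mod (ACT 0 + (t' - d₀)) (d₀ + (t'' - t')),
      Nat.mod_eq_of_lt hlt]
  exact key_mod (2 * k) r (d₀ + (t'' - t')) hm hr hlt
end

section
/- Fast maintenance test at ACT = k: suppose at the start of slice t the counter has ACT_t = k and stores v = ACT_{t'} for its last-set slice t' with t - t' < 2k. Then the true distance t - t' is ≥ k if and only if (k ≤ v ≤ 2k - 1) or v = 0. -/
theorem fast_test_act_k (k : ℕ) (hk : 1 ≤ k) (ACT : ℕ → ℕ)
    (h0 : ACT 0 < 2 * k)
    (hrec : ∀ t, ACT (t + 1) = (ACT t + 1) % (2 * k))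
    (t' t : ℕ) (hlt : t' < t) (hd : t - t' < 2 * k)
    (hact : ACT t = k) :
    k ≤ t - t' ↔ (k ≤ ACT t' ∧ ACT t' ≤ 2 * k - 1) ∨ ACT t' = 0 := by
  have hpos : 0 < 2 * k := by omega
  have hbound : ∀ s, ACT s < 2 * k := by
    intro s
    induction s with
    | zero => exact h0
    | succ n ih => rw [hrec]; exact Nat.mod_lt _ hpos
  have hshift : ∀ n, ACT (t' + n) = (ACT t' + n) % (2 * k) := by
    intro n
    induction n with
    | zero => simp [Nat.mod_eq_of_lt (hbound t')]
    | succ n ih =>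
      have : t' + (n + 1) = (t' + n) + 1 := by omega
      rw [this, hrec, ih, Nat.mod_add_mod, ← Nat.add_assoc]
  have hkey : (ACT t' + (t - t')) % (2 * k) = k := by
    rw [← hshift]
    have : t' + (t - t') = t := by omega
    rw [this, hact]
  have ha := hbound t'
  have hdm := Nat.div_add_mod (ACT t' + (t - t')) (2 * k)
  rw [hkey] at hdm
  have hq : (ACT t' + (t - t')) / (2 * k) < 2 := by
    apply Nat.div_lt_of_lt_mul; omega
  set q := (ACT t' + (t - t')) / (2 * k) with hqdef
  interval_cases q <;> omega
end
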